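/- arXiv:0801.1862 — 2 statements merged into one kernel-verified Lean document; each statement's English description precedes it below -/
import Mathlib

section
/- Let G be a group with finite generating set X. If for some n ≥ 1 there exist x, y in the ball B(n) of radius n (with respect to the word metric d_X, centered at the identity) with d_X(x,y) = 2 such that every path from x to y in the Cayley graph that stays within B(n) has length at least 2n, then there exists a path of length exactly 2n from x to y staying in B(n) and passing through the identity. -/
/-! Walk from `x` back to `1` along a geodesic word for `x`, then out to `y` along a geodesic
word for `y`. Every vertex is a prefix product of a geodesic word, so the path stays in `B(n)`,
and its length is `|x| + |y| ≤ 2n`; the hypothesis forces equality. -/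

variable {G : Type*} [Group G]

/-- Word length of `g` with respect to the generating set `X` (generators and inverses allowed). -/
noncomputable def wLen (X : Set G) (g : G) : ℕ :=
  sInf {n | ∃ w : List G, (∀ s ∈ w, s ∈ X ∨ s⁻¹ ∈ X) ∧ w.prod = g ∧ w.length = n}

/-- Word metric associated to `X`. -/
noncomputable def wDist (X : Set G) (g h : G) : ℕ := wLen X (g⁻¹ * h)

/-- One step in the Cayley graph of `(G, X)`. -/
def IsStep (X : Set G) (a b : G) : Prop := ∃ s, (s ∈ X ∨ s⁻¹ ∈ X) ∧ b = a * s

/-- A (nonempty) edge path in the Cayley graph, recorded as its list of vertices. -/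
def IsPath (X : Set G) (p : List G) : Prop := p ≠ [] ∧ List.Chain' (IsStep X) p

/-- The path stays in the ball of radius `n` about the identity. -/
def InBall (X : Set G) (n : ℕ) (p : List G) : Prop := ∀ a ∈ p, wLen X a ≤ n

/-- Length (number of edges) of a path given by its vertex list. -/
def pLen (p : List G) : ℕ := p.length - 1

theorem List.IsChain.reverse_append_cons {α : Type*} {R : α → α → Prop}
    (hR : ∀ a b, R a b → R b a) {a : α} {l₁ l₂ : List α}
    (h₁ : (a :: l₁).IsChain R) (h₂ : (a :: l₂).IsChain R) :
    (l₁.reverse ++ a :: l₂).IsChain R := by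
  have h₁' : (l₁.reverse ++ [a]).IsChain R := by
    rw [← List.reverse_cons, List.isChain_reverse]
    exact h₁.imp fun _ _ => hR _ _
  simpa using h₁'.append_overlap h₂ (List.cons_ne_nil a [])

def IsWord (X : Set G) (w : List G) : Prop := ∀ s ∈ w, s ∈ X ∨ s⁻¹ ∈ X

section

variable {X : Set G}

theorem exists_isWord_prod_eq (hX : Subgroup.closure X = ⊤) (g : G) :
    ∃ w, IsWord X w ∧ w.prod = g := by
  have hg : g ∈ (Subgroup.closure X).toSubmonoid := hX ▸ Subgroup.mem_top g
  rw [Subgroup.closure_toSubmonoid] at hg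
  obtain ⟨w, hw, rfl⟩ := Submonoid.exists_list_of_mem_closure hg
  exact ⟨w, fun s hs => by simpa using hw s hs, rfl⟩

theorem exists_isWord_length_eq_wLen (hX : Subgroup.closure X = ⊤) (g : G) :
    ∃ w, IsWord X w ∧ w.prod = g ∧ w.length = wLen X g := by
  obtain ⟨w, hw, hg⟩ := exists_isWord_prod_eq hX g
  exact Nat.sInf_mem (s := {n | ∃ w : List G, IsWord X w ∧ w.prod = g ∧ w.length = n})
    ⟨w.length, w, hw, hg, rfl⟩

theorem wLen_prod_le_length {w : List G} (hw : IsWord X w) : wLen X w.prod ≤ w.length :=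
  Nat.sInf_le ⟨w, hw, rfl, rfl⟩

theorem IsStep.symm {a b : G} (h : IsStep X a b) : IsStep X b a := by
  obtain ⟨s, hs, rfl⟩ := h
  exact ⟨s⁻¹, by simpa using hs.symm, by group⟩

theorem isChain_scanl_mul {w : List G} (hw : IsWord X w) (a : G) :
    (w.scanl (· * ·) a).IsChain (IsStep X) := by
  induction w generalizing a with
  | nil => simp
  | cons s w ih =>
    rw [List.scanl_cons, List.isChain_cons, List.head?_scanl]
    refine ⟨?_, ih (fun t ht => hw t (List.mem_cons_of_mem s ht)) _⟩
    rintro b ⟨⟩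
    exact ⟨s, hw s List.mem_cons_self, rfl⟩

theorem getLast?_partialProds (w : List G) : w.partialProds.getLast? = some w.prod := by
  rw [List.partialProds, List.getLast?_scanl, List.prod_eq_foldl]

theorem wLen_le_of_mem_partialProds {w : List G} (hw : IsWord X w) {g : G}
    (hg : g ∈ w.partialProds) : wLen X g ≤ w.length := by
  obtain ⟨i, hi, rfl⟩ := List.getElem_of_mem hg
  rw [List.getElem_partialProds]
  calc wLen X (w.take i).prod ≤ (w.take i).length :=
        wLen_prod_le_length fun s hs => hw s (List.mem_of_mem_take hs)
    _ ≤ w.length := List.length_take_le' _ _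

theorem exists_isPath_through_one (hX : Subgroup.closure X = ⊤) {n : ℕ} {x y : G}
    (hx : wLen X x ≤ n) (hy : wLen X y ≤ n) :
    ∃ p : List G, IsPath X p ∧ p.head? = some x ∧ p.getLast? = some y ∧
      InBall X n p ∧ pLen p = wLen X x + wLen X y ∧ (1 : G) ∈ p := by
  obtain ⟨u, hu, rfl, hux⟩ := exists_isWord_length_eq_wLen hX x
  obtain ⟨v, hv, rfl, hvy⟩ := exists_isWord_length_eq_wLen hX y
  set q := u.partialProds.tail
  set r := v.partialProds.tail
  have hq : u.partialProds = 1 :: q := List.eq_cons_of_mem_head? List.head?_scanl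
  have hr : v.partialProds = 1 :: r := List.eq_cons_of_mem_head? List.head?_scanl
  refine ⟨q.reverse ++ 1 :: r, ⟨by simp, ?_⟩, ?_, ?_, ?_, ?_, by simp⟩
  · refine List.IsChain.reverse_append_cons (fun _ _ => IsStep.symm) ?_ ?_
    · exact hq ▸ isChain_scanl_mul hu 1
    · exact hr ▸ isChain_scanl_mul hv 1
  · rw [← List.singleton_append, ← List.append_assoc, ← List.reverse_cons, ← hq,
      List.head?_append_of_ne_nil _ (by simp [List.partialProds]), List.head?_reverse,
      getLast?_partialProds]
  · rw [List.getLast?_append_of_ne_nil _ (List.cons_ne_nil _ _), ← hr, getLast?_partialProds]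
  · intro g hg
    rw [List.mem_append, List.mem_reverse] at hg
    rcases hg with hg | hg
    · have hg' : g ∈ u.partialProds := hq ▸ List.mem_cons_of_mem 1 hg
      exact (wLen_le_of_mem_partialProds hu hg').trans (hux.trans_le hx)
    · exact (wLen_le_of_mem_partialProds hv (hr ▸ hg)).trans (hvy.trans_le hy)
  · have hql := congrArg List.length hq
    have hrl := congrArg List.length hr
    simp only [List.length_partialProds, List.length_cons] at hql hrl
    simp only [pLen, List.length_append, List.length_reverse, List.length_cons]
    omega

end

theorem stmt4_general (X : Set G) (hXgen : Subgroup.closure X = ⊤)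
    (n : ℕ) (x y : G)
    (hx : wLen X x ≤ n) (hy : wLen X y ≤ n)
    (hpaths : ∀ p : List G, IsPath X p → p.head? = some x → p.getLast? = some y →
      InBall X n p → 2 * n ≤ pLen p) :
    ∃ p : List G, IsPath X p ∧ p.head? = some x ∧ p.getLast? = some y ∧
      InBall X n p ∧ pLen p = 2 * n ∧ (1 : G) ∈ p := by
  obtain ⟨p, hpath, hhead, hlast, hball, hlen, hone⟩ := exists_isPath_through_one hXgen hx hy
  have hle : pLen p ≤ 2 * n := by omega
  exact ⟨p, hpath, hhead, hlast, hball, hle.antisymm (hpaths p hpath hhead hlast hball), hone⟩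

/-- If `x, y ∈ B(n)` with `d_X(x,y) = 2` and every path between them inside `B(n)`
has length at least `2n`, then there is a path of length exactly `2n` from `x` to `y`
inside `B(n)` passing through the identity. -/
theorem stmt4 (X : Set G) (hXfin : X.Finite) (hXgen : Subgroup.closure X = ⊤)
    (n : ℕ) (hn : 1 ≤ n) (x y : G)
    (hx : wLen X x ≤ n) (hy : wLen X y ≤ n) (hd : wDist X x y = 2)
    (hpaths : ∀ p : List G, IsPath X p → p.head? = some x → p.getLast? = some y →
      InBall X n p → 2 * n ≤ pLen p) :
    ∃ p : List G, IsPath X p ∧ p.head? = some x ∧ p.getLast? = some y ∧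
      InBall X n p ∧ pLen p = 2 * n ∧ (1 : G) ∈ p :=
  stmt4_general X hXgen n x y hx hy hpaths
end

section
/- Let F be Thompson's group and let X = {x_0, x_{i_1}, ..., x_{i_j}} with 1 ≤ i_1 < ... < i_j be a generating set, and Y = {x_0, x_1, x_{i_2 - i_1 + 1}, ..., x_{i_j - i_1 + 1}}. Then for every g ∈ F, |l_X(g) - l_Y(g)| ≤ 2(i_1 - 1); hence the identity map (F, d_X) → (F, d_Y) is a 2(i_1 - 1)-coarse isometry. -/
variable {G : Type*} [Group G]

/-- The relators of the standard infinite presentation of Thompson's group `F`. -/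
def thompsonRels : Set (FreeGroup ℕ) :=
  {r | ∃ i j : ℕ, i < j ∧
    r = (FreeGroup.of i)⁻¹ * FreeGroup.of j * FreeGroup.of i * (FreeGroup.of (j + 1))⁻¹}

/-- Thompson's group `F`, presented by `⟨x_k, k ≥ 0 | x_i⁻¹ x_j x_i = x_{j+1} for i < j⟩`. -/
abbrev ThompsonF := PresentedGroup thompsonRels

/-- The standard generators `x_n` of Thompson's group `F`. -/
def x (n : ℕ) : ThompsonF := PresentedGroup.of n

/-
Conjugation by `c = x₀^(i₁-1)` fixes `x₀` and sends `x_i` to `x_{i-i₁+1}` for `i ≥ i₁`, so it is an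
automorphism of `F` carrying `X` onto `Y`; hence `l_Y(g) = l_X(c⁻¹ g c)`. Since `c` and `c⁻¹` are
words of length `i₁ - 1` in `x₀ ∈ X ∩ Y`, conjugating by `c` changes word length by at most
`2(i₁ - 1)`.
-/

variable {H : Type*} [Group H]

def wordLengths (X : Set G) (g : G) : Set ℕ :=
  {n | ∃ w : List G, (∀ s ∈ w, s ∈ X ∨ s⁻¹ ∈ X) ∧ w.prod = g ∧ w.length = n}

lemma wLen_eq_sInf_wordLengths (X : Set G) (g : G) : wLen X g = sInf (wordLengths X g) := rfl

lemma wLen_le_length {X : Set G} {w : List G} (hw : ∀ s ∈ w, s ∈ X ∨ s⁻¹ ∈ X) :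
    wLen X w.prod ≤ w.length :=
  Nat.sInf_le ⟨w, hw, rfl, rfl⟩

lemma exists_word_length_eq_wLen {X : Set G} (hX : Subgroup.closure X = ⊤) (g : G) :
    ∃ w : List G, (∀ s ∈ w, s ∈ X ∨ s⁻¹ ∈ X) ∧ w.prod = g ∧ w.length = wLen X g := by
  have hg : g ∈ (Subgroup.closure X).toSubmonoid := by rw [hX]; trivial
  rw [Subgroup.closure_toSubmonoid] at hg
  obtain ⟨w, hw, rfl⟩ := Submonoid.exists_list_of_mem_closure hg
  exact Nat.sInf_mem (s := wordLengths X w.prod)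
    ⟨w.length, w, fun s hs => (Set.mem_union _ _ _).1 (hw s hs), rfl, rfl⟩

lemma wLen_mul_le {X : Set G} (hX : Subgroup.closure X = ⊤) (g h : G) :
    wLen X (g * h) ≤ wLen X g + wLen X h := by
  obtain ⟨u, hu, rfl, hul⟩ := exists_word_length_eq_wLen hX g
  obtain ⟨v, hv, rfl, hvl⟩ := exists_word_length_eq_wLen hX h
  rw [← hul, ← hvl, ← List.prod_append, ← List.length_append]
  exact wLen_le_length fun s hs => (List.mem_append.1 hs).elim (hu s) (hv s)

lemma wLen_pow_le {X : Set G} {s : G} (hs : s ∈ X) (k : ℕ) : wLen X (s ^ k) ≤ k := by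
  simpa using wLen_le_length (X := X) (w := List.replicate k s)
    fun t ht => Or.inl (List.eq_of_mem_replicate ht ▸ hs)

lemma wordLengths_subset_inv (X : Set G) (g : G) : wordLengths X g ⊆ wordLengths X g⁻¹ := by
  rintro _ ⟨w, hw, rfl, rfl⟩
  refine ⟨(w.map fun s => s⁻¹).reverse, fun s hs => ?_, (List.prod_inv_reverse w).symm, by simp⟩
  obtain ⟨t, ht, rfl⟩ := List.mem_map.1 (List.mem_reverse.1 hs)
  rw [inv_inv]
  exact (hw t ht).symm

-- Equality of the sets of lengths also covers `g` outside the closure, where `wLen` is junk `0`.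
lemma wLen_inv (X : Set G) (g : G) : wLen X g⁻¹ = wLen X g := by
  rw [wLen_eq_sInf_wordLengths, wLen_eq_sInf_wordLengths,
    (wordLengths_subset_inv X g).antisymm (by simpa using wordLengths_subset_inv X g⁻¹)]

lemma wordLengths_subset_image (f : G →* H) (X : Set G) (g : G) :
    wordLengths X g ⊆ wordLengths (f '' X) (f g) := by
  rintro _ ⟨w, hw, rfl, rfl⟩
  refine ⟨w.map f, fun s hs => ?_, (map_list_prod f w).symm, List.length_map _⟩
  obtain ⟨t, ht, rfl⟩ := List.mem_map.1 hs
  exact (hw t ht).imp (Set.mem_image_of_mem f) fun h => ⟨t⁻¹, h, map_inv f t⟩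

lemma wLen_image (φ : G ≃* H) (X : Set G) (g : G) : wLen (φ '' X) (φ g) = wLen X g := by
  have h := wordLengths_subset_image φ.symm.toMonoidHom (φ '' X) (φ g)
  simp only [MulEquiv.coe_toMonoidHom, MulEquiv.symm_apply_apply, Set.image_image,
    Set.image_id'] at h
  rw [wLen_eq_sInf_wordLengths, wLen_eq_sInf_wordLengths,
    h.antisymm (wordLengths_subset_image φ.toMonoidHom X g)]

lemma wLen_conj_le {X : Set G} (hX : Subgroup.closure X = ⊤) (c g : G) :
    wLen X (c * g * c⁻¹) ≤ wLen X g + 2 * wLen X c := by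
  have := (wLen_mul_le hX (c * g) c⁻¹).trans (Nat.add_le_add_right (wLen_mul_le hX c g) _)
  rw [wLen_inv] at this
  omega

theorem abs_wLen_sub_wLen_conj_image_le {X : Set G} (hX : Subgroup.closure X = ⊤) (c g : G) :
    |(wLen X g : ℤ) - wLen (MulAut.conj c '' X) g| ≤ 2 * wLen X c := by
  set Y := MulAut.conj c '' X
  have hY : Subgroup.closure Y = ⊤ := by
    have h := (MulAut.conj c).toMonoidHom.map_closure X
    rw [MulEquiv.coe_toMonoidHom] at h
    rw [← h, hX, Subgroup.map_top_of_surjective _ (MulAut.conj c).surjective]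
  have hYc : wLen Y c = wLen X c := by
    simpa using wLen_image (MulAut.conj c) X c
  have hXY : wLen X g ≤ wLen Y g + 2 * wLen X c := by
    rw [← wLen_image (MulAut.conj c) X g, ← hYc]
    exact wLen_conj_le hY c g
  have hYX : wLen Y g ≤ wLen X g + 2 * wLen X c := by
    have h : wLen Y g = wLen X (c⁻¹ * g * c⁻¹⁻¹) := by
      rw [← wLen_image (MulAut.conj c) X, MulAut.conj_apply]
      congr 1
      group
    rw [h, ← wLen_inv X c]
    exact wLen_conj_le hX c⁻¹ g
  rw [abs_sub_le_iff]
  omega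

lemma conj_x_zero_x_succ {j : ℕ} (hj : 1 ≤ j) : MulAut.conj (x 0) (x (j + 1)) = x j := by
  have hrel : PresentedGroup.mk thompsonRels
      ((FreeGroup.of 0)⁻¹ * FreeGroup.of j * FreeGroup.of 0 * (FreeGroup.of (j + 1))⁻¹) = 1 :=
    (QuotientGroup.eq_one_iff _).2 (Subgroup.subset_normalClosure ⟨0, j, hj, rfl⟩)
  change (x 0)⁻¹ * x j * x 0 * (x (j + 1))⁻¹ = 1 at hrel
  rw [MulAut.conj_apply, ← mul_inv_eq_one.mp hrel]
  group

lemma conj_x_zero_pow_x (k : ℕ) {i : ℕ} (hi : k < i) :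
    MulAut.conj (x 0 ^ k) (x i) = x (i - k) := by
  induction k generalizing i with
  | zero => simp
  | succ k ih =>
    obtain ⟨j, rfl⟩ : ∃ j, i = j + 1 := ⟨i - 1, by omega⟩
    rw [pow_succ, map_mul, MulAut.mul_apply, conj_x_zero_x_succ (by omega), ih (by omega)]
    congr 1
    omega

lemma image_conj_x_zero_pow (k : ℕ) (S : Set ℕ) (hS : ∀ i ∈ S, k < i) :
    MulAut.conj (x 0 ^ k) '' ({x 0} ∪ x '' S) = {x 0} ∪ (fun i => x (i - k)) '' S := by
  rw [Set.image_union, Set.image_singleton, Set.image_image]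
  congr 1
  · rw [MulAut.conj_apply, ← pow_succ, pow_succ', mul_inv_cancel_right]
  · exact Set.image_congr fun i hi => conj_x_zero_pow_x k (hS i hi)

theorem stmt18_general (I : Finset ℕ) (hne : I.Nonempty) (hpos : ∀ i ∈ I, 1 ≤ i)
    (X Y : Set ThompsonF)
    (hX : X = {x 0} ∪ (fun i => x i) '' I)
    (hY : Y = {x 0} ∪ (fun i => x (i - I.min' hne + 1)) '' I)
    (hXgen : Subgroup.closure X = ⊤) :
    (∀ g : ThompsonF,
      |(wLen X g : ℤ) - (wLen Y g : ℤ)| ≤ 2 * ((I.min' hne : ℤ) - 1)) ∧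
    (∀ g h : ThompsonF,
      |(wDist X g h : ℤ) - (wDist Y g h : ℤ)| ≤ 2 * ((I.min' hne : ℤ) - 1)) := by
  set m := I.min' hne
  have hm : 1 ≤ m := hpos m (I.min'_mem hne)
  have hYX : Y = MulAut.conj (x 0 ^ (m - 1)) '' X := by
    rw [hX, hY, image_conj_x_zero_pow (m - 1) I fun i hi => by have := I.min'_le i hi; omega]
    congr 1
    exact Set.image_congr fun i hi => by have := I.min'_le i hi; congr 1; omega
  have hc : wLen X (x 0 ^ (m - 1)) ≤ m - 1 := wLen_pow_le (by simp [hX]) _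
  have hlen (g : ThompsonF) : |(wLen X g : ℤ) - wLen Y g| ≤ 2 * ((m : ℤ) - 1) := by
    rw [hYX]
    refine (abs_wLen_sub_wLen_conj_image_le hXgen _ g).trans ?_
    omega
  exact ⟨hlen, fun g h => hlen (g⁻¹ * h)⟩

/-- For `X = {x_0, x_{i_1}, …, x_{i_j}}` (with `1 ≤ i_1 < ⋯ < i_j`) and
`Y = {x_0, x_1, x_{i_2-i_1+1}, …, x_{i_j-i_1+1}}`, word lengths differ by at most
`2(i_1 - 1)`, so the identity map is a `2(i_1-1)`-coarse isometry of word metrics. -/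
theorem stmt18 (I : Finset ℕ) (hne : I.Nonempty) (hpos : ∀ i ∈ I, 1 ≤ i)
    (X Y : Set ThompsonF)
    (hX : X = {x 0} ∪ (fun i => x i) '' I)
    (hY : Y = {x 0} ∪ (fun i => x (i - I.min' hne + 1)) '' I)
    (hXgen : Subgroup.closure X = ⊤) (hYgen : Subgroup.closure Y = ⊤) :
    (∀ g : ThompsonF,
      |(wLen X g : ℤ) - (wLen Y g : ℤ)| ≤ 2 * ((I.min' hne : ℤ) - 1)) ∧
    (∀ g h : ThompsonF,
      |(wDist X g h : ℤ) - (wDist Y g h : ℤ)| ≤ 2 * ((I.min' hne : ℤ) - 1)) :=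
  stmt18_general I hne hpos X Y hX hY hXgen
end
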